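/- arXiv:2206.00529 — 2 statements merged into one kernel-verified Lean document; each statement's English description precedes it below -/
import Mathlib

section
/- Let Δ̂ᵢ(x,y) = (1/m)∑_{j=1}^m ξ_{i,j}(∇f_{i,j}(x) - ∇f_{i,j}(y)) where the random variables ξ_{i,j} satisfy E[ξ_{i,j}] = 1 and E[ξ_{i,j}²] ≤ E² for all i ∈ 𝒢, j ∈ [m], and assume each f_{i,j} is L_{i,j}-smooth and the ξ_{i,j} are independent across j (or nonnegative). Then (1/G)∑_{i∈𝒢} E‖Δ̂ᵢ(x,y) - Δᵢ(x,y)‖² ≤ E² · (max_{i,j} L_{i,j})² · ‖x - y‖², where Δᵢ(x,y) = ∇fᵢ(x) - ∇fᵢ(y) and fᵢ = (1/m)∑_j f_{i,j}. -/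
open MeasureTheory

theorem local_hessian_variance_bound {d G m : ℕ} (hG : 1 ≤ G) (hm : 1 ≤ m)
    {Ω : Type*} [MeasurableSpace Ω] (μ : Measure Ω) [IsProbabilityMeasure μ]
    (f : Fin G → Fin m → EuclideanSpace ℝ (Fin d) → ℝ)
    (gf : Fin G → Fin m → EuclideanSpace ℝ (Fin d) → EuclideanSpace ℝ (Fin d))
    (L : Fin G → Fin m → ℝ) (Emax Lmax : ℝ)
    (hgrad : ∀ i j x, HasGradientAt (f i j) (gf i j x) x)
    (hLip : ∀ i j x y, ‖gf i j x - gf i j y‖ ≤ L i j * ‖x - y‖)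
    (hL0 : ∀ i j, 0 ≤ L i j) (hLmax : ∀ i j, L i j ≤ Lmax)
    (ξ : Fin G → Fin m → Ω → ℝ)
    (hmem : ∀ i j, MemLp (ξ i j) 2 μ)
    (hpos : ∀ i j ω, 0 ≤ ξ i j ω)
    (hmean : ∀ i j, ∫ ω, ξ i j ω ∂μ = 1)
    (hsecond : ∀ i j, ∫ ω, (ξ i j ω) ^ 2 ∂μ ≤ Emax ^ 2)
    (x y : EuclideanSpace ℝ (Fin d)) :
    (1 / (G : ℝ)) * ∑ i, ∫ ω,
        ‖(m : ℝ)⁻¹ • ∑ j, ξ i j ω • (gf i j x - gf i j y) -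
          (m : ℝ)⁻¹ • ∑ j, (gf i j x - gf i j y)‖ ^ 2 ∂μ ≤
      Emax ^ 2 * Lmax ^ 2 * ‖x - y‖ ^ 2 := by
  have hm0 : (0:ℝ) < m := by exact_mod_cast hm
  have hG0 : (0:ℝ) < G := by exact_mod_cast hG
  set C : ℝ := Lmax * ‖x - y‖ with hCdef
  have hLmax0 : 0 ≤ Lmax := le_trans (hL0 ⟨0, hG⟩ ⟨0, hm⟩) (hLmax _ _)
  have hC0 : 0 ≤ C := mul_nonneg hLmax0 (norm_nonneg _)
  have hB : Emax ^ 2 * Lmax ^ 2 * ‖x - y‖ ^ 2 = Emax ^ 2 * C ^ 2 := by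
    rw [hCdef]; ring
  -- per-i bound
  have key : ∀ i, (∫ ω,
        ‖(m : ℝ)⁻¹ • ∑ j, ξ i j ω • (gf i j x - gf i j y) -
          (m : ℝ)⁻¹ • ∑ j, (gf i j x - gf i j y)‖ ^ 2 ∂μ) ≤ Emax ^ 2 * C ^ 2 := by
    intro i
    set v : Fin m → EuclideanSpace ℝ (Fin d) := fun j => gf i j x - gf i j y with hv
    have hξint : ∀ j, Integrable (ξ i j) μ := fun j => (hmem i j).integrable (by norm_num)
    have hsqint : ∀ j, Integrable (fun ω => (ξ i j ω - 1) ^ 2) μ := by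
      intro j
      have h2 : MemLp (fun ω => ξ i j ω - 1) 2 μ := (hmem i j).sub (memLp_const 1)
      have := h2.integrable_sq
      simpa [pow_two] using this
    have hmoment : ∀ j, ∫ ω, (ξ i j ω - 1) ^ 2 ∂μ ≤ Emax ^ 2 := by
      intro j
      have hsq : Integrable (fun ω => (ξ i j ω) ^ 2) μ := by
        have := (hmem i j).integrable_sq; simpa [pow_two] using this
      have e : (fun ω => (ξ i j ω - 1) ^ 2)
          = fun ω => ((ξ i j ω) ^ 2 - 2 * ξ i j ω) + 1 := by
        funext ω; ring
      have hsub : Integrable (fun ω => ξ i j ω ^ 2 - 2 * ξ i j ω) μ :=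
        hsq.sub ((hξint j).const_mul 2)
      rw [e, integral_add hsub (integrable_const 1),
        integral_sub hsq ((hξint j).const_mul 2), integral_const_mul, hmean,
        integral_const]
      simp only [measure_univ, probReal_univ, ENNReal.toReal_one, smul_eq_mul, one_mul, mul_one]
      have := hsecond i j
      linarith
    have hvC : ∀ j, ‖v j‖ ≤ C :=
      fun j => (hLip i j x y).trans (mul_le_mul_of_nonneg_right (hLmax i j) (norm_nonneg _))
    -- pointwise bound
    have hpt : ∀ ω, ‖(m : ℝ)⁻¹ • ∑ j, ξ i j ω • v j - (m : ℝ)⁻¹ • ∑ j, v j‖ ^ 2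
        ≤ C ^ 2 * (m : ℝ)⁻¹ * ∑ j, (ξ i j ω - 1) ^ 2 := by
      intro ω
      have h1 : (m : ℝ)⁻¹ • ∑ j, ξ i j ω • v j - (m : ℝ)⁻¹ • ∑ j, v j
          = (m : ℝ)⁻¹ • ∑ j, (ξ i j ω - 1) • v j := by
        rw [← smul_sub, ← Finset.sum_sub_distrib]
        congr 1
        refine Finset.sum_congr rfl fun j _ => ?_
        rw [sub_smul, one_smul]
      have h2 : ‖∑ j, (ξ i j ω - 1) • v j‖ ≤ ∑ j, |ξ i j ω - 1| * C := by
        refine (norm_sum_le _ _).trans (Finset.sum_le_sum fun j _ => ?_)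
        rw [norm_smul, Real.norm_eq_abs]
        exact mul_le_mul_of_nonneg_left (hvC j) (abs_nonneg _)
      have h3 : (∑ j, |ξ i j ω - 1|) ^ 2 ≤ (m : ℝ) * ∑ j, (ξ i j ω - 1) ^ 2 := by
        have := sq_sum_le_card_mul_sum_sq (s := Finset.univ)
          (f := fun j : Fin m => |ξ i j ω - 1|)
        simpa [sq_abs] using this
      have h4 : ‖(m : ℝ)⁻¹ • ∑ j, (ξ i j ω - 1) • v j‖
          ≤ (m : ℝ)⁻¹ * ((∑ j, |ξ i j ω - 1|) * C) := by
        rw [norm_smul, Real.norm_eq_abs, abs_of_nonneg (by positivity : (0:ℝ) ≤ (m:ℝ)⁻¹)]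
        refine mul_le_mul_of_nonneg_left (h2.trans ?_) (by positivity)
        rw [← Finset.sum_mul]
      rw [h1]
      calc ‖(m : ℝ)⁻¹ • ∑ j, (ξ i j ω - 1) • v j‖ ^ 2
          ≤ ((m : ℝ)⁻¹ * ((∑ j, |ξ i j ω - 1|) * C)) ^ 2 := by
            exact pow_le_pow_left₀ (norm_nonneg _) h4 2
        _ = (m : ℝ)⁻¹ ^ 2 * C ^ 2 * (∑ j, |ξ i j ω - 1|) ^ 2 := by ring
        _ ≤ (m : ℝ)⁻¹ ^ 2 * C ^ 2 * ((m : ℝ) * ∑ j, (ξ i j ω - 1) ^ 2) := by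
            exact mul_le_mul_of_nonneg_left h3 (by positivity)
        _ = C ^ 2 * (m : ℝ)⁻¹ * ∑ j, (ξ i j ω - 1) ^ 2 := by
            field_simp
    have hgint : Integrable (fun ω => C ^ 2 * (m : ℝ)⁻¹ * ∑ j, (ξ i j ω - 1) ^ 2) μ := by
      exact ((integrable_finset_sum _ fun j _ => hsqint j).const_mul _)
    have hle : (∫ ω,
        ‖(m : ℝ)⁻¹ • ∑ j, ξ i j ω • v j - (m : ℝ)⁻¹ • ∑ j, v j‖ ^ 2 ∂μ)
        ≤ ∫ ω, C ^ 2 * (m : ℝ)⁻¹ * ∑ j, (ξ i j ω - 1) ^ 2 ∂μ := by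
      refine integral_mono_of_nonneg ?_ hgint ?_
      · filter_upwards with ω using by positivity
      · filter_upwards with ω using hpt ω
    refine hle.trans ?_
    rw [integral_const_mul, integral_finset_sum _ fun j _ => hsqint j]
    have hsum : (∑ j, ∫ ω, (ξ i j ω - 1) ^ 2 ∂μ) ≤ (m : ℝ) * Emax ^ 2 := by
      calc (∑ j : Fin m, ∫ ω, (ξ i j ω - 1) ^ 2 ∂μ)
          ≤ ∑ _j : Fin m, Emax ^ 2 := Finset.sum_le_sum fun j _ => hmoment j
        _ = (m : ℝ) * Emax ^ 2 := by simp [mul_comm]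
    calc C ^ 2 * (m : ℝ)⁻¹ * ∑ j, ∫ ω, (ξ i j ω - 1) ^ 2 ∂μ
        ≤ C ^ 2 * (m : ℝ)⁻¹ * ((m : ℝ) * Emax ^ 2) :=
          mul_le_mul_of_nonneg_left hsum (by positivity)
      _ = Emax ^ 2 * C ^ 2 := by field_simp
  rw [hB]
  calc (1 / (G : ℝ)) * ∑ i, ∫ ω,
        ‖(m : ℝ)⁻¹ • ∑ j, ξ i j ω • (gf i j x - gf i j y) -
          (m : ℝ)⁻¹ • ∑ j, (gf i j x - gf i j y)‖ ^ 2 ∂μ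
      ≤ (1 / (G : ℝ)) * ∑ _i : Fin G, Emax ^ 2 * C ^ 2 := by
        refine mul_le_mul_of_nonneg_left (Finset.sum_le_sum fun i _ => key i) (by positivity)
    _ = Emax ^ 2 * C ^ 2 := by
        simp only [Finset.sum_const, Finset.card_univ, Fintype.card_fin, nsmul_eq_mul]
        field_simp
end

section
/- Let x₁,…,x_n be random vectors, 𝒢 ⊆ [n] the good set, and π a uniformly random permutation of [n]. Form buckets B_i of size s and bucket means y_i = (1/s)∑_{k∈B_i} x_{π(k)}. For a bucket index i conditioned on all members being good, E[y_i] = E[x̄] where x̄ = (1/G)∑_{j∈𝒢} x_j; moreover if (1/(G(G-1)))∑_{i,l∈𝒢, i≠l} E‖x_i - x_l‖² ≤ σ², then for two fixed distinct all-good buckets i, l: E‖y_i - y_l‖² ≤ σ²/s. -/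
open MeasureTheory

/-- The bucket of index `i`: workers `k` with `⌊k/s⌋ = i`. -/
def bucket (n s N : ℕ) (i : Fin N) : Finset (Fin n) :=
  Finset.univ.filter fun k => k.val / s = i.val

/-- The mean of the (permuted) vectors in bucket `i`. -/
noncomputable def bucketMean {d : ℕ} {Ω : Type*} (n s N : ℕ)
    (x : Fin n → Ω → EuclideanSpace ℝ (Fin d)) (π : Equiv.Perm (Fin n))
    (i : Fin N) (ω : Ω) : EuclideanSpace ℝ (Fin d) :=
  (s : ℝ)⁻¹ • ∑ k ∈ bucket n s N i, x (π k) ω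

/-- Permutations under which all members of buckets `i` and `l` are good. -/
def goodPerms (n s N : ℕ) (good : Finset (Fin n)) (i l : Fin N) :
    Finset (Equiv.Perm (Fin n)) :=
  Finset.univ.filter fun π =>
    (∀ k ∈ bucket n s N i, π k ∈ good) ∧ (∀ k ∈ bucket n s N l, π k ∈ good)

section Aux

local notation "⟪" a ", " b "⟫" => (inner ℝ a b : ℝ)

lemma integrable_inner_of_mem {α E : Type*} [MeasurableSpace α] {μ : Measure α}
    [NormedAddCommGroup E] [InnerProductSpace ℝ E] {f g : α → E}
    (hf : MemLp f 2 μ) (hg : MemLp g 2 μ) :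
    Integrable (fun ω => ⟪f ω, g ω⟫) μ := by
  have h := L2.integrable_inner (𝕜 := ℝ) (hf.toLp f) (hg.toLp g)
  refine h.congr ?_
  filter_upwards [hf.coeFn_toLp, hg.coeFn_toLp] with ω h1 h2
  rw [h1, h2]

lemma mem_bucket {n s N : ℕ} {i : Fin N} {k : Fin n} :
    k ∈ bucket n s N i ↔ k.val / s = i.val := by simp [bucket]

lemma bucket_disjoint {n s N : ℕ} {i l : Fin N} (h : i ≠ l) {k : Fin n}
    (hk : k ∈ bucket n s N i) (hk' : k ∈ bucket n s N l) : False := by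
  rw [mem_bucket] at hk hk'
  exact h (Fin.ext (hk ▸ hk'))

lemma bucket_eq_image {n s N : ℕ} (hs : 1 ≤ s) (hn : n = N * s) (i : Fin N) :
    ∃ e : Fin s → Fin n, Function.Injective e ∧ (∀ t, e t ∈ bucket n s N i) ∧
      bucket n s N i = Finset.image e Finset.univ := by
  have hspos : 0 < s := hs
  have hlt : ∀ t : Fin s, i.val * s + t.val < n := by
    intro t
    have h1 : i.val * s + t.val < (i.val + 1) * s := by
      rw [add_mul, one_mul]; omega
    have h2 : (i.val + 1) * s ≤ N * s := Nat.mul_le_mul_right s i.isLt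
    omega
  refine ⟨fun t => ⟨i.val * s + t.val, hlt t⟩, ?_, ?_, ?_⟩
  · intro t u htu
    have : i.val * s + t.val = i.val * s + u.val := congrArg Fin.val htu
    exact Fin.ext (by omega)
  · intro t
    rw [mem_bucket]
    show (i.val * s + t.val) / s = i.val
    rw [mul_comm, Nat.mul_add_div hspos, Nat.div_eq_of_lt t.isLt, add_zero]
  · ext k
    simp only [Finset.mem_image, Finset.mem_univ, true_and, mem_bucket]
    constructor
    · intro hk
      refine ⟨⟨k.val % s, Nat.mod_lt _ hspos⟩, Fin.ext ?_⟩
      show i.val * s + k.val % s = k.val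
      conv_rhs => rw [← Nat.div_add_mod k.val s]
      rw [hk, mul_comm]
    · rintro ⟨t, rfl⟩
      show (i.val * s + t.val) / s = i.val
      rw [mul_comm, Nat.mul_add_div hspos, Nat.div_eq_of_lt t.isLt, add_zero]

variable {n s N : ℕ} {good : Finset (Fin n)}

lemma swap_mem_good {a b j : Fin n} (ha : a ∈ good) (hb : b ∈ good) (hj : j ∈ good) :
    Equiv.swap a b j ∈ good := by
  rcases eq_or_ne j a with rfl | h1
  · rwa [Equiv.swap_apply_left]
  rcases eq_or_ne j b with rfl | h2
  · rwa [Equiv.swap_apply_right]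
  rwa [Equiv.swap_apply_of_ne_of_ne h1 h2]

lemma mem_goodPerms_iff {i l : Fin N} {π : Equiv.Perm (Fin n)} :
    π ∈ goodPerms n s N good i l ↔
      (∀ k ∈ bucket n s N i, π k ∈ good) ∧ (∀ k ∈ bucket n s N l, π k ∈ good) := by
  simp [goodPerms]

lemma mul_mem_goodPerms {i l : Fin N} {τ π : Equiv.Perm (Fin n)}
    (hτ : ∀ j ∈ good, τ j ∈ good) (hπ : π ∈ goodPerms n s N good i l) :
    τ * π ∈ goodPerms n s N good i l := by
  rw [mem_goodPerms_iff] at hπ ⊢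
  exact ⟨fun k hk => hτ _ (hπ.1 k hk), fun k hk => hτ _ (hπ.2 k hk)⟩

lemma fiber_card_single {i l : Fin N} (k : Fin n) {j1 j2 : Fin n}
    (hj1 : j1 ∈ good) (hj2 : j2 ∈ good) :
    ((goodPerms n s N good i l).filter (fun π => π k = j1)).card =
      ((goodPerms n s N good i l).filter (fun π => π k = j2)).card := by
  have key : ∀ (a b : Fin n), a ∈ good → b ∈ good →
      ∀ π ∈ (goodPerms n s N good i l).filter (fun π => π k = a),
        Equiv.swap a b * π ∈ (goodPerms n s N good i l).filter (fun π => π k = b) := by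
    intro a b ha hb π hπ
    rw [Finset.mem_filter] at hπ ⊢
    refine ⟨mul_mem_goodPerms (fun j hj => swap_mem_good ha hb hj) hπ.1, ?_⟩
    rw [Equiv.Perm.mul_apply, hπ.2, Equiv.swap_apply_left]
  refine Finset.card_nbij' (fun π => Equiv.swap j1 j2 * π) (fun π => Equiv.swap j2 j1 * π)
    (key j1 j2 hj1 hj2) ?_ ?_ ?_
  · intro π hπ
    have := key j2 j1 hj2 hj1 π hπ
    exact this
  · intro π _
    simp [← mul_assoc, Equiv.swap_comm j2 j1, Equiv.swap_mul_self]
  · intro π _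
    simp [← mul_assoc, Equiv.swap_comm j1 j2, Equiv.swap_mul_self]

lemma fiber_card_pair_le {i l : Fin N} (a b : Fin n) {j1 j1' j2 j2' : Fin n}
    (hj1 : j1 ∈ good) (hj1' : j1' ∈ good) (hj2 : j2 ∈ good) (hj2' : j2' ∈ good)
    (h1 : j1 ≠ j1') (h2 : j2 ≠ j2') :
    ((goodPerms n s N good i l).filter (fun π => π a = j1 ∧ π b = j1')).card ≤
      ((goodPerms n s N good i l).filter (fun π => π a = j2 ∧ π b = j2')).card := by
  set j'' := Equiv.swap j1 j2 j1' with hj''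
  have hj''good : j'' ∈ good := swap_mem_good hj1 hj2 hj1'
  have hj''ne : j'' ≠ j2 := by
    intro hcon
    have := congrArg (Equiv.swap j1 j2) hcon
    rw [hj'', Equiv.swap_apply_self, Equiv.swap_apply_right] at this
    exact h1.symm this
  set τ := Equiv.swap j'' j2' * Equiv.swap j1 j2 with hτdef
  have hτgood : ∀ j ∈ good, τ j ∈ good := by
    intro j hj
    exact swap_mem_good hj''good hj2' (swap_mem_good hj1 hj2 hj)
  have hτ1 : τ j1 = j2 := by
    rw [hτdef, Equiv.Perm.mul_apply, Equiv.swap_apply_left,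
      Equiv.swap_apply_of_ne_of_ne (Ne.symm hj''ne) h2]
  have hτ1' : τ j1' = j2' := by
    rw [hτdef, Equiv.Perm.mul_apply, ← hj'', Equiv.swap_apply_left]
  refine Finset.card_le_card_of_injOn (fun π => τ * π) ?_ ?_
  · intro π hπ
    rw [Finset.mem_coe, Finset.mem_filter] at hπ ⊢
    refine ⟨mul_mem_goodPerms hτgood hπ.1, ?_, ?_⟩
    · rw [Equiv.Perm.mul_apply, hπ.2.1, hτ1]
    · rw [Equiv.Perm.mul_apply, hπ.2.2, hτ1']
  · intro π _ π' _ h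
    exact mul_left_cancel h

lemma fiber_card_pair {i l : Fin N} (a b : Fin n) {j1 j1' j2 j2' : Fin n}
    (hj1 : j1 ∈ good) (hj1' : j1' ∈ good) (hj2 : j2 ∈ good) (hj2' : j2' ∈ good)
    (h1 : j1 ≠ j1') (h2 : j2 ≠ j2') :
    ((goodPerms n s N good i l).filter (fun π => π a = j1 ∧ π b = j1')).card =
      ((goodPerms n s N good i l).filter (fun π => π a = j2 ∧ π b = j2')).card :=
  le_antisymm (fiber_card_pair_le a b hj1 hj1' hj2 hj2' h1 h2)
    (fiber_card_pair_le a b hj2 hj2' hj1 hj1' h2 h1)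

lemma single_sum {M : Type*} [AddCommMonoid M] {i l : Fin N} {k : Fin n}
    (hk : k ∈ bucket n s N i) (f : Fin n → M) :
    good.card • ∑ π ∈ goodPerms n s N good i l, f (π k) =
      (goodPerms n s N good i l).card • ∑ j ∈ good, f j := by
  classical
  set P := goodPerms n s N good i l with hP
  have hmaps : ∀ π ∈ P, π k ∈ good := fun π hπ => ((mem_goodPerms_iff).1 hπ).1 k hk
  have hfib : ∑ π ∈ P, f (π k) =
      ∑ j ∈ good, (P.filter (fun π => π k = j)).card • f j := by
    rw [← Finset.sum_fiberwise_of_maps_to hmaps (fun π => f (π k))]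
    refine Finset.sum_congr rfl fun j hj => ?_
    calc ∑ π ∈ P.filter (fun π => π k = j), f (π k)
        = ∑ π ∈ P.filter (fun π => π k = j), f j := by
          refine Finset.sum_congr rfl fun π hπ => ?_
          rw [(Finset.mem_filter.1 hπ).2]
      _ = _ := Finset.sum_const _
  have hcardfib : ∀ j ∈ good, (P.filter (fun π => π k = j)).card * good.card = P.card := by
    intro j hj
    have h0 : P.card = ∑ j' ∈ good, (P.filter (fun π => π k = j')).card :=
      Finset.card_eq_sum_card_fiberwise hmaps
    have hall : ∀ j' ∈ good, (P.filter (fun π => π k = j')).card =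
        (P.filter (fun π => π k = j)).card := fun j' hj' => fiber_card_single k hj' hj
    rw [h0, Finset.sum_congr rfl hall, Finset.sum_const, smul_eq_mul, mul_comm]
  rw [hfib, Finset.smul_sum, Finset.smul_sum]
  refine Finset.sum_congr rfl fun j hj => ?_
  rw [smul_smul, mul_comm, hcardfib j hj]

lemma pair_sum {M : Type*} [AddCommMonoid M] {i l : Fin N} {a b : Fin n}
    (ha : a ∈ bucket n s N i) (hb : b ∈ bucket n s N l) (hab : a ≠ b)
    (f : Fin n → Fin n → M) :
    good.offDiag.card • ∑ π ∈ goodPerms n s N good i l, f (π a) (π b) =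
      (goodPerms n s N good i l).card • ∑ p ∈ good.offDiag, f p.1 p.2 := by
  classical
  set P := goodPerms n s N good i l with hP
  have hmaps : ∀ π ∈ P, (π a, π b) ∈ good.offDiag := by
    intro π hπ
    rw [mem_goodPerms_iff] at hπ
    exact Finset.mem_offDiag.2 ⟨hπ.1 a ha, hπ.2 b hb, fun h => hab (π.injective h)⟩
  have hfib : ∑ π ∈ P, f (π a) (π b) =
      ∑ p ∈ good.offDiag, (P.filter (fun π => (π a, π b) = p)).card • f p.1 p.2 := by
    rw [← Finset.sum_fiberwise_of_maps_to hmaps (fun π => f (π a) (π b))]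
    refine Finset.sum_congr rfl fun p hp => ?_
    calc ∑ π ∈ P.filter (fun π => (π a, π b) = p), f (π a) (π b)
        = ∑ π ∈ P.filter (fun π => (π a, π b) = p), f p.1 p.2 := by
          refine Finset.sum_congr rfl fun π hπ => ?_
          obtain ⟨-, h⟩ := Finset.mem_filter.1 hπ
          rw [← h]
      _ = _ := Finset.sum_const _
  have hfilter_eq : ∀ p : Fin n × Fin n, P.filter (fun π => (π a, π b) = p) =
      P.filter (fun π => π a = p.1 ∧ π b = p.2) := by
    intro p
    refine Finset.filter_congr fun π _ => ?_
    constructor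
    · intro h; exact ⟨congrArg Prod.fst h, congrArg Prod.snd h⟩
    · intro h; exact Prod.ext h.1 h.2
  have hcardfib : ∀ p ∈ good.offDiag,
      (P.filter (fun π => (π a, π b) = p)).card * good.offDiag.card = P.card := by
    intro p hp
    obtain ⟨hp1, hp2, hp3⟩ := Finset.mem_offDiag.1 hp
    have h0 : P.card = ∑ q ∈ good.offDiag, (P.filter (fun π => (π a, π b) = q)).card :=
      Finset.card_eq_sum_card_fiberwise hmaps
    have hall : ∀ q ∈ good.offDiag, (P.filter (fun π => (π a, π b) = q)).card =
        (P.filter (fun π => (π a, π b) = p)).card := by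
      intro q hq
      obtain ⟨hq1, hq2, hq3⟩ := Finset.mem_offDiag.1 hq
      rw [hfilter_eq q, hfilter_eq p]
      exact fiber_card_pair a b hq1 hq2 hp1 hp2 hq3 hp3
    rw [h0, Finset.sum_congr rfl hall, Finset.sum_const, smul_eq_mul, mul_comm]
  rw [hfib, Finset.smul_sum, Finset.smul_sum]
  refine Finset.sum_congr rfl fun p hp => ?_
  rw [smul_smul, mul_comm, hcardfib p hp]

lemma cross_sum {i l : Fin N} (hil : i ≠ l) {a1 b1 a2 b2 : Fin n}
    (ha1 : a1 ∈ bucket n s N i) (hb1 : b1 ∈ bucket n s N l)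
    (ha2 : a2 ∈ bucket n s N i) (hb2 : b2 ∈ bucket n s N l)
    (h12 : a2 ≠ a1) (h34 : b2 ≠ b1)
    (F : Fin n → Fin n → Fin n → Fin n → ℝ)
    (hF : ∀ p q r t, F q p r t = - F p q r t) :
    ∑ π ∈ goodPerms n s N good i l, F (π a1) (π b1) (π a2) (π b2) = 0 := by
  classical
  set P := goodPerms n s N good i l with hP
  set σ := Equiv.swap a1 b1 with hσ
  have hab : a1 ≠ b1 := fun h => bucket_disjoint hil ha1 (h ▸ hb1)
  have hmem : ∀ π ∈ P, π * σ ∈ P := by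
    intro π hπ
    rw [mem_goodPerms_iff] at hπ ⊢
    constructor
    · intro k hk
      rw [Equiv.Perm.mul_apply]
      rcases eq_or_ne k a1 with rfl | hka
      · rw [hσ, Equiv.swap_apply_left]; exact hπ.2 b1 hb1
      · have hkb : k ≠ b1 := fun h => bucket_disjoint hil hk (h ▸ hb1)
        rw [hσ, Equiv.swap_apply_of_ne_of_ne hka hkb]; exact hπ.1 k hk
    · intro k hk
      rw [Equiv.Perm.mul_apply]
      rcases eq_or_ne k b1 with rfl | hkb
      · rw [hσ, Equiv.swap_apply_right]; exact hπ.1 a1 ha1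
      · have hka : k ≠ a1 := fun h => bucket_disjoint hil ha1 (h ▸ hk)
        rw [hσ, Equiv.swap_apply_of_ne_of_ne hka hkb]; exact hπ.2 k hk
  have hinv : ∀ π : Equiv.Perm (Fin n), π * σ * σ = π := by
    intro π
    rw [mul_assoc, hσ, Equiv.swap_mul_self, mul_one]
  have key : ∑ π ∈ P, F (π a1) (π b1) (π a2) (π b2) =
      ∑ π ∈ P, F (π (σ a1)) (π (σ b1)) (π (σ a2)) (π (σ b2)) := by
    refine Finset.sum_nbij' (fun π => π * σ) (fun π => π * σ) hmem hmem
      (fun π _ => hinv π) (fun π _ => hinv π) ?_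
    intro π hπ
    simp [hσ, Equiv.Perm.mul_apply, Equiv.swap_apply_self]
  have hσa1 : σ a1 = b1 := Equiv.swap_apply_left a1 b1
  have hσb1 : σ b1 = a1 := Equiv.swap_apply_right a1 b1
  have hσa2 : σ a2 = a2 := Equiv.swap_apply_of_ne_of_ne h12
    (fun h => bucket_disjoint hil ha2 (h ▸ hb1))
  have hσb2 : σ b2 = b2 := Equiv.swap_apply_of_ne_of_ne
    (fun h => bucket_disjoint hil ha1 (h ▸ hb2)) h34
  have key2 : ∑ π ∈ P, F (π a1) (π b1) (π a2) (π b2) =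
      - ∑ π ∈ P, F (π a1) (π b1) (π a2) (π b2) := by
    conv_lhs => rw [key]
    rw [← Finset.sum_neg_distrib]
    refine Finset.sum_congr rfl fun π _ => ?_
    rw [hσa1, hσb1, hσa2, hσb2, hF]
  linarith

end Aux

theorem bucketing_lemma {d : ℕ} (n s N G : ℕ) (hs : 1 ≤ s) (hn : n = N * s)
    (hG : 2 ≤ G) {Ω : Type*} [MeasurableSpace Ω] (μ : Measure Ω)
    [IsProbabilityMeasure μ] (good : Finset (Fin n)) (hcard : good.card = G)
    (x : Fin n → Ω → EuclideanSpace ℝ (Fin d))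
    (hmem : ∀ j, MemLp (x j) 2 μ) (σ : ℝ)
    (hσ : (1 / ((G : ℝ) * ((G : ℝ) - 1))) *
        ∑ j ∈ good, ∑ l ∈ good,
          (if j ≠ l then ∫ ω, ‖x j ω - x l ω‖ ^ 2 ∂μ else 0) ≤ σ ^ 2) :
    (∀ i : Fin N, (goodPerms n s N good i i).Nonempty →
        ((goodPerms n s N good i i).card : ℝ)⁻¹ •
            ∑ π ∈ goodPerms n s N good i i, ∫ ω, bucketMean n s N x π i ω ∂μ =
          ∫ ω, (G : ℝ)⁻¹ • ∑ j ∈ good, x j ω ∂μ) ∧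
      (∀ i l : Fin N, i ≠ l → (goodPerms n s N good i l).Nonempty →
        ((goodPerms n s N good i l).card : ℝ)⁻¹ *
            ∑ π ∈ goodPerms n s N good i l,
              ∫ ω, ‖bucketMean n s N x π i ω - bucketMean n s N x π l ω‖ ^ 2 ∂μ ≤
          σ ^ 2 / s) := by
  classical
  have hint : ∀ j, Integrable (x j) μ := fun j => (hmem j).integrable one_le_two
  have hGpos : (0:ℝ) < G := by
    have : (2:ℝ) ≤ G := by exact_mod_cast hG
    linarith
  have hspos : (0:ℝ) < s := by exact_mod_cast hs
  constructor
  · -- Part 1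
    intro i hne
    set P := goodPerms n s N good i i with hPdef
    have hPpos : (0:ℝ) < P.card := by exact_mod_cast Finset.card_pos.2 hne
    obtain ⟨e, he_inj, he_mem, he_img⟩ := bucket_eq_image hs hn i
    have hbcard : (bucket n s N i).card = s := by
      rw [he_img, Finset.card_image_of_injective _ he_inj, Finset.card_univ, Fintype.card_fin]
    set B : EuclideanSpace ℝ (Fin d) := ∑ j ∈ good, ∫ ω, x j ω ∂μ with hB
    have hRHS : ∫ ω, (G : ℝ)⁻¹ • ∑ j ∈ good, x j ω ∂μ = (G:ℝ)⁻¹ • B := by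
      rw [integral_smul, integral_finset_sum _ (fun j _ => hint j)]
    have hbm : ∀ π : Equiv.Perm (Fin n), ∫ ω, bucketMean n s N x π i ω ∂μ =
        (s : ℝ)⁻¹ • ∑ k ∈ bucket n s N i, ∫ ω, x (π k) ω ∂μ := by
      intro π
      unfold bucketMean
      rw [integral_smul, integral_finset_sum _ (fun k _ => hint _)]
    have hper : ∀ k ∈ bucket n s N i,
        ∑ π ∈ P, ∫ ω, x (π k) ω ∂μ = ((P.card : ℝ) / G) • B := by
      intro k hk
      have h1 := single_sum (good := good) (i := i) (l := i) hk (fun j => ∫ ω, x j ω ∂μ)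
      rw [hcard] at h1
      have h2 : (G : ℝ) • ∑ π ∈ P, ∫ ω, x (π k) ω ∂μ = (P.card : ℝ) • B := by
        rw [Nat.cast_smul_eq_nsmul, Nat.cast_smul_eq_nsmul]; exact h1
      have h3 := congrArg (fun v => (G:ℝ)⁻¹ • v) h2
      simp only [smul_smul, inv_mul_cancel₀ (ne_of_gt hGpos), one_smul] at h3
      rw [h3, div_eq_inv_mul]
    calc ((P.card : ℝ))⁻¹ • ∑ π ∈ P, ∫ ω, bucketMean n s N x π i ω ∂μ
        = ((P.card : ℝ))⁻¹ • ∑ π ∈ P, (s : ℝ)⁻¹ • ∑ k ∈ bucket n s N i, ∫ ω, x (π k) ω ∂μ := by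
          rw [Finset.sum_congr rfl fun π _ => hbm π]
      _ = ((P.card : ℝ))⁻¹ • (s : ℝ)⁻¹ • ∑ k ∈ bucket n s N i, ∑ π ∈ P, ∫ ω, x (π k) ω ∂μ := by
          rw [← Finset.smul_sum, Finset.sum_comm]
      _ = ((P.card : ℝ))⁻¹ • (s : ℝ)⁻¹ • ∑ k ∈ bucket n s N i, ((P.card : ℝ) / G) • B := by
          rw [Finset.sum_congr rfl hper]
      _ = (G:ℝ)⁻¹ • B := by
          rw [Finset.sum_const, hbcard, ← Nat.cast_smul_eq_nsmul ℝ, smul_smul, smul_smul,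
            smul_smul]
          congr 1
          have hs0 : (s:ℝ) ≠ 0 := ne_of_gt hspos
          have hP0 : ((P.card : ℕ):ℝ) ≠ 0 := ne_of_gt hPpos
          rw [mul_assoc ((P.card : ℕ):ℝ)⁻¹, inv_mul_cancel₀ hs0, mul_one, div_eq_mul_inv,
            inv_mul_cancel_left₀ hP0]
    rw [hRHS]
  · -- Part 2
    intro i l hil hne
    set P := goodPerms n s N good i l with hPdef
    have hPpos : (0:ℝ) < P.card := by exact_mod_cast Finset.card_pos.2 hne
    obtain ⟨eA, hAinj, hAmem, hAimg⟩ := bucket_eq_image hs hn i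
    obtain ⟨eB, hBinj, hBmem, hBimg⟩ := bucket_eq_image hs hn l
    set S : ℝ := ∑ p ∈ good.offDiag, ∫ ω, ‖x p.1 ω - x p.2 ω‖ ^ 2 ∂μ with hSdef
    have hS_eq : ∑ j ∈ good, ∑ l' ∈ good,
        (if j ≠ l' then ∫ ω, ‖x j ω - x l' ω‖ ^ 2 ∂μ else 0) = S := by
      rw [hSdef, (show good.offDiag = (good ×ˢ good).filter (fun a => a.1 ≠ a.2) by ext p; simp [Finset.mem_offDiag, and_assoc]), Finset.sum_filter, Finset.sum_product]
    have hKcast : (good.offDiag.card : ℝ) = (G:ℝ) * ((G:ℝ) - 1) := by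
      rw [Finset.offDiag_card, hcard]
      have hGG : G ≤ G * G := Nat.le_mul_of_pos_left G (by omega)
      push_cast [Nat.cast_sub hGG]
      ring
    have hKpos : (0:ℝ) < (G:ℝ) * ((G:ℝ) - 1) := by
      have : (2:ℝ) ≤ G := by exact_mod_cast hG
      nlinarith
    -- inner products
    have hinner_int : ∀ (j1 j2 j3 j4 : Fin n),
        Integrable (fun ω => (inner ℝ (x j1 ω - x j2 ω) (x j3 ω - x j4 ω) : ℝ)) μ :=
      fun j1 j2 j3 j4 => integrable_inner_of_mem ((hmem j1).sub (hmem j2))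
        ((hmem j3).sub (hmem j4))
    set F : Fin n → Fin n → Fin n → Fin n → ℝ :=
      fun j1 j2 j3 j4 => ∫ ω, (inner ℝ (x j1 ω - x j2 ω) (x j3 ω - x j4 ω) : ℝ) ∂μ with hFdef
    have hF_anti : ∀ p q r t, F q p r t = - F p q r t := by
      intro p q r t
      simp only [hFdef]
      rw [← integral_neg]
      refine integral_congr_ae (Filter.Eventually.of_forall fun ω => ?_)
      show (inner ℝ (x q ω - x p ω) (x r ω - x t ω) : ℝ) =
        -(inner ℝ (x p ω - x q ω) (x r ω - x t ω) : ℝ)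
      rw [show x q ω - x p ω = -(x p ω - x q ω) by abel, inner_neg_left]
    -- step A : per-permutation expansion
    have hstepA : ∀ π ∈ P, ∫ ω, ‖bucketMean n s N x π i ω - bucketMean n s N x π l ω‖ ^ 2 ∂μ =
        ((s:ℝ)⁻¹)^2 * ∑ t : Fin s, ∑ u : Fin s, F (π (eA t)) (π (eB t)) (π (eA u)) (π (eB u)) := by
      intro π _
      have hpt : ∀ ω, ‖bucketMean n s N x π i ω - bucketMean n s N x π l ω‖ ^ 2 =
          ((s:ℝ)⁻¹)^2 * ∑ t : Fin s, ∑ u : Fin s,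
            (inner ℝ (x (π (eA t)) ω - x (π (eB t)) ω) (x (π (eA u)) ω - x (π (eB u)) ω) : ℝ) := by
        intro ω
        have hA : bucketMean n s N x π i ω = (s:ℝ)⁻¹ • ∑ t : Fin s, x (π (eA t)) ω := by
          unfold bucketMean
          rw [hAimg, Finset.sum_image (fun a _ b _ h => hAinj h)]
        have hB : bucketMean n s N x π l ω = (s:ℝ)⁻¹ • ∑ t : Fin s, x (π (eB t)) ω := by
          unfold bucketMean
          rw [hBimg, Finset.sum_image (fun a _ b _ h => hBinj h)]
        rw [hA, hB, ← smul_sub, ← Finset.sum_sub_distrib, norm_smul, mul_pow]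
        congr 1
        · rw [Real.norm_eq_abs, abs_of_nonneg (by positivity)]
        · rw [← real_inner_self_eq_norm_sq, sum_inner]
          exact Finset.sum_congr rfl fun t _ => by rw [inner_sum]
      calc ∫ ω, ‖bucketMean n s N x π i ω - bucketMean n s N x π l ω‖ ^ 2 ∂μ
          = ∫ ω, ((s:ℝ)⁻¹)^2 * ∑ t : Fin s, ∑ u : Fin s,
              (inner ℝ (x (π (eA t)) ω - x (π (eB t)) ω) (x (π (eA u)) ω - x (π (eB u)) ω) : ℝ) ∂μ := by
            exact integral_congr_ae (Filter.Eventually.of_forall fun ω => hpt ω)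
        _ = ((s:ℝ)⁻¹)^2 * ∑ t : Fin s, ∑ u : Fin s, F (π (eA t)) (π (eB t)) (π (eA u)) (π (eB u)) := by
            rw [integral_const_mul]
            congr 1
            rw [integral_finset_sum _ (fun t _ =>
              integrable_finset_sum _ (fun u _ => hinner_int _ _ _ _))]
            exact Finset.sum_congr rfl fun t _ =>
              integral_finset_sum _ (fun u _ => hinner_int _ _ _ _)
    -- step B : cross terms vanish
    have hcross : ∀ t u : Fin s, t ≠ u →
        ∑ π ∈ P, F (π (eA t)) (π (eB t)) (π (eA u)) (π (eB u)) = 0 := by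
      intro t u htu
      exact cross_sum hil (hAmem t) (hBmem t) (hAmem u) (hBmem u)
        (fun h => htu (hAinj h).symm) (fun h => htu (hBinj h).symm) F hF_anti
    -- step C : diagonal terms
    have hdiag : ∀ t : Fin s,
        (good.offDiag.card : ℝ) * ∑ π ∈ P, F (π (eA t)) (π (eB t)) (π (eA t)) (π (eB t)) =
          (P.card : ℝ) * S := by
      intro t
      have hab : eA t ≠ eB t := fun h => bucket_disjoint hil (hAmem t) (h ▸ hBmem t)
      have hFnorm : ∀ j1 j2 : Fin n, F j1 j2 j1 j2 = ∫ ω, ‖x j1 ω - x j2 ω‖ ^ 2 ∂μ := by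
        intro j1 j2
        simp only [hFdef]
        exact integral_congr_ae (Filter.Eventually.of_forall fun ω =>
          real_inner_self_eq_norm_sq _)
      have h1 := pair_sum (good := good) (hAmem t) (hBmem t) hab
        (fun j1 j2 => ∫ ω, ‖x j1 ω - x j2 ω‖ ^ 2 ∂μ)
      have h2 : (good.offDiag.card : ℝ) *
          ∑ π ∈ P, (fun j1 j2 => ∫ ω, ‖x j1 ω - x j2 ω‖ ^ 2 ∂μ) (π (eA t)) (π (eB t)) =
          (P.card : ℝ) * S := by
        rw [hSdef, ← nsmul_eq_mul, ← nsmul_eq_mul]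
        exact h1
      rw [Finset.sum_congr rfl (fun π _ => hFnorm (π (eA t)) (π (eB t)))]
      exact h2
    -- put it together
    have hsum : ∑ π ∈ P, ∫ ω, ‖bucketMean n s N x π i ω - bucketMean n s N x π l ω‖ ^ 2 ∂μ =
        ((s:ℝ)⁻¹)^2 * ∑ t : Fin s, ∑ π ∈ P, F (π (eA t)) (π (eB t)) (π (eA t)) (π (eB t)) := by
      rw [Finset.sum_congr rfl hstepA, ← Finset.mul_sum]
      congr 1
      rw [Finset.sum_comm]
      refine Finset.sum_congr rfl fun t _ => ?_
      rw [Finset.sum_comm]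
      rw [Finset.sum_eq_single t (fun u _ hut => hcross t u (Ne.symm hut)) ?_]
      · intro h
        exact absurd (Finset.mem_univ t) h
    have hdiagval : ∀ t : Fin s,
        ∑ π ∈ P, F (π (eA t)) (π (eB t)) (π (eA t)) (π (eB t)) =
          (P.card : ℝ) * S / ((G:ℝ) * ((G:ℝ) - 1)) := by
      intro t
      have := hdiag t
      rw [hKcast] at this
      rw [eq_div_iff (ne_of_gt hKpos)]
      linear_combination this
    have hsum2 : ∑ π ∈ P, ∫ ω, ‖bucketMean n s N x π i ω - bucketMean n s N x π l ω‖ ^ 2 ∂μ =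
        ((s:ℝ)⁻¹)^2 * ((s:ℝ) * ((P.card : ℝ) * S / ((G:ℝ) * ((G:ℝ) - 1)))) := by
      rw [hsum, Finset.sum_congr rfl (fun t _ => hdiagval t), Finset.sum_const,
        Finset.card_univ, Fintype.card_fin, nsmul_eq_mul]
    rw [hsum2]
    have hfinal : ((P.card : ℝ))⁻¹ * (((s:ℝ)⁻¹)^2 * ((s:ℝ) * ((P.card : ℝ) * S / ((G:ℝ) * ((G:ℝ) - 1))))) =
        (1 / ((G:ℝ) * ((G:ℝ) - 1)) * S) * (1 / s) := by
      have hs0 : (s:ℝ) ≠ 0 := ne_of_gt hspos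
      have hP0 : (P.card:ℝ) ≠ 0 := ne_of_gt hPpos
      simp only [div_eq_mul_inv, one_mul]
      calc _ = (((P.card:ℝ))⁻¹ * (P.card:ℝ)) * ((s:ℝ)⁻¹ * s) * (((G:ℝ) * ((G:ℝ) - 1))⁻¹ * S) * (s:ℝ)⁻¹ := by ring
        _ = _ := by rw [inv_mul_cancel₀ hP0, inv_mul_cancel₀ hs0]; ring
    rw [hfinal]
    have hσ' : 1 / ((G:ℝ) * ((G:ℝ) - 1)) * S ≤ σ ^ 2 := by rw [← hS_eq]; exact hσ
    calc (1 / ((G:ℝ) * ((G:ℝ) - 1)) * S) * (1 / s) ≤ σ ^ 2 * (1 / s) := by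
          exact mul_le_mul_of_nonneg_right hσ' (by positivity)
      _ = σ ^ 2 / s := by ring
end
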